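/- arXiv:2603.24227 — 3 statements merged into one kernel-verified Lean document; each statement's English description precedes it below -/
import Mathlib

section
/- The set C* = { y ∈ ℝ^K : 1^T y ≥ ‖y‖₂ } is the dual cone of C = { y ∈ ℝ_+^K : 1^T y ≥ √(K−1)·‖y‖₂ }, i.e., C* = { y : ∀ x ∈ C, x^T y ≥ 0 }. -/
/-!
Write `x = (a/n)·1 + u` and `y = (b/n)·1 + v` with `u, v ⊥ 1`, where `n = K`, `a = 1ᵀx`, `b = 1ᵀy`.
Membership `x ∈ C` gives `(n-1)·n‖u‖² ≤ a²` and `‖y‖ ≤ 1ᵀy` gives `n‖v‖² ≤ (n-1)·b²`, so by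
Cauchy–Schwarz `|u·v| ≤ ab/n` and `x·y = u·v + ab/n ≥ 0`.

Conversely, testing `y` against `x = 1` gives `b ≥ 0`, and testing it against `x = t·1 - v`
with `n t² = (n-1)‖v‖²` gives `‖v‖² ≤ t b`, which squares to `n‖v‖² ≤ (n-1)·b²`, i.e.
`‖y‖ ≤ 1ᵀy`. This `x` lies in `C` (on its boundary) and is nonnegative because a vector `v`
with `1ᵀv = 0` satisfies `n v_i² ≤ (n-1)‖v‖²`.
-/

open Finset

variable {ι : Type*} [Fintype ι]

noncomputable def centered (y : ι → ℝ) (i : ι) : ℝ :=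
  y i - (∑ j, y j) / Fintype.card ι

lemma sum_mul_centered {v : ι → ℝ} (hv : ∑ i, v i = 0) (y : ι → ℝ) :
    ∑ i, v i * centered y i = ∑ i, v i * y i := by
  simp only [centered, mul_sub, sum_sub_distrib, ← sum_mul, hv, zero_mul, sub_zero]

section Nonempty

variable [Nonempty ι]

lemma sum_centered (y : ι → ℝ) : ∑ i, centered y i = 0 := by
  have : (Fintype.card ι : ℝ) ≠ 0 := by positivity
  simp only [centered, sum_sub_distrib, sum_const, card_univ, nsmul_eq_mul]
  field_simp
  ring

lemma sum_mul_eq_sum_centered_mul_centered_add (x y : ι → ℝ) :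
    ∑ i, x i * y i =
      ∑ i, centered x i * centered y i + (∑ i, x i) * (∑ i, y i) / Fintype.card ι := by
  have : (Fintype.card ι : ℝ) ≠ 0 := by positivity
  rw [sum_mul_centered (sum_centered x)]
  simp only [centered, sub_mul, sum_sub_distrib, div_mul_eq_mul_div, ← sum_div, ← mul_sum]
  ring

lemma card_mul_sum_centered_sq (y : ι → ℝ) :
    Fintype.card ι * ∑ i, centered y i ^ 2 =
      Fintype.card ι * ∑ i, y i ^ 2 - (∑ i, y i) ^ 2 := by
  have : (Fintype.card ι : ℝ) ≠ 0 := by positivity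
  simp only [sq, sum_mul_eq_sum_centered_mul_centered_add y y]
  field_simp
  ring

end Nonempty

lemma card_mul_sq_le_of_sum_eq_zero {v : ι → ℝ} (hv : ∑ i, v i = 0) (i : ι) :
    Fintype.card ι * v i ^ 2 ≤ (Fintype.card ι - 1) * ∑ j, v j ^ 2 := by
  classical
  have : Nonempty ι := ⟨i⟩
  have hrest : ∑ j ∈ univ.erase i, v j = -v i := by
    linarith [sum_erase_add univ v (mem_univ i)]
  have hsq : ∑ j ∈ univ.erase i, v j ^ 2 = ∑ j, v j ^ 2 - v i ^ 2 := by
    linarith [sum_erase_add univ (fun j => v j ^ 2) (mem_univ i)]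
  have hcard : ((univ.erase i).card : ℝ) = Fintype.card ι - 1 := by
    rw [card_erase_of_mem (mem_univ i), card_univ, Nat.cast_pred Fintype.card_pos]
  have := sq_sum_le_card_mul_sum_sq (s := univ.erase i) (f := v)
  rw [hrest, hsq, hcard, neg_sq] at this
  linarith

lemma const_sub_nonneg_and_sq_le {v : ι → ℝ} (hv : ∑ i, v i = 0) {t : ℝ} (ht : 0 ≤ t)
    (hvt : (Fintype.card ι - 1) * ∑ i, v i ^ 2 ≤ Fintype.card ι * t ^ 2) :
    (∀ i, 0 ≤ t - v i) ∧
      (Fintype.card ι - 1) * ∑ i, (t - v i) ^ 2 ≤ (∑ i, (t - v i)) ^ 2 := by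
  constructor
  · intro i
    have hn : (0 : ℝ) < Fintype.card ι := by
      exact_mod_cast Fintype.card_pos_iff.mpr ⟨i⟩
    have hvi : v i ^ 2 ≤ t ^ 2 :=
      le_of_mul_le_mul_left ((card_mul_sq_le_of_sum_eq_zero hv i).trans hvt) hn
    linarith [(abs_le_of_sq_le_sq' hvi ht).2]
  · have hsum : ∑ i, (t - v i) = Fintype.card ι * t := by
      simp [sum_sub_distrib, hv]
    have hsq : ∑ i, (t - v i) ^ 2 = Fintype.card ι * t ^ 2 + ∑ i, v i ^ 2 := by
      simp only [sub_sq, sum_add_distrib, sum_sub_distrib, ← mul_sum, mul_assoc, hv]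
      simp
    rw [hsum, hsq]
    linear_combination hvt

theorem sum_mul_nonneg_of_sq_le [Nonempty ι] {x y : ι → ℝ}
    (hx₀ : 0 ≤ ∑ i, x i) (hx : (Fintype.card ι - 1) * ∑ i, x i ^ 2 ≤ (∑ i, x i) ^ 2)
    (hy₀ : 0 ≤ ∑ i, y i) (hy : ∑ i, y i ^ 2 ≤ (∑ i, y i) ^ 2) :
    0 ≤ ∑ i, x i * y i := by
  have hn : (0 : ℝ) < Fintype.card ι := by exact_mod_cast Fintype.card_pos
  have hU := card_mul_sum_centered_sq x
  have hV := card_mul_sum_centered_sq y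
  set n : ℝ := (Fintype.card ι : ℝ)
  set a := ∑ i, x i
  set b := ∑ i, y i
  set U := ∑ i, centered x i ^ 2
  set V := ∑ i, centered y i ^ 2
  have hU' : (n - 1) * (n * U) ≤ a ^ 2 := by
    rw [hU]; linear_combination n * hx
  have hV' : n * V ≤ (n - 1) * b ^ 2 := by
    rw [hV]; linear_combination n * hy
  have hUV : (n * U) * (n * V) ≤ (a * b) ^ 2 :=
    calc (n * U) * (n * V) ≤ (n * U) * ((n - 1) * b ^ 2) := by gcongr
      _ = ((n - 1) * (n * U)) * b ^ 2 := by ring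
      _ ≤ a ^ 2 * b ^ 2 := by gcongr
      _ = (a * b) ^ 2 := by ring
  have hcs : (n * ∑ i, centered x i * centered y i) ^ 2 ≤ (a * b) ^ 2 := by
    have := sum_mul_sq_le_sq_mul_sq univ (centered x) (centered y)
    calc _ = n ^ 2 * (∑ i, centered x i * centered y i) ^ 2 := by ring
      _ ≤ n ^ 2 * (U * V) := by gcongr
      _ = (n * U) * (n * V) := by ring
      _ ≤ (a * b) ^ 2 := hUV
  have hlow := (abs_le_of_sq_le_sq' hcs (by positivity)).1
  rw [sum_mul_eq_sum_centered_mul_centered_add, ← mul_nonneg_iff_of_pos_left hn, mul_add,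
    mul_div_cancel₀ _ hn.ne']
  linarith

theorem sum_nonneg_and_sum_sq_le_of_forall_sum_mul_nonneg [Nonempty ι] {y : ι → ℝ}
    (h : ∀ x : ι → ℝ, (∀ i, 0 ≤ x i) →
      (Fintype.card ι - 1) * ∑ i, x i ^ 2 ≤ (∑ i, x i) ^ 2 → 0 ≤ ∑ i, x i * y i) :
    0 ≤ ∑ i, y i ∧ ∑ i, y i ^ 2 ≤ (∑ i, y i) ^ 2 := by
  have hn : (1 : ℝ) ≤ Fintype.card ι := by exact_mod_cast Fintype.card_pos
  have hQ := card_mul_sum_centered_sq y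
  set n : ℝ := (Fintype.card ι : ℝ)
  set b := ∑ i, y i
  have htest : ∀ v : ι → ℝ, ∑ i, v i = 0 → ∀ t, 0 ≤ t →
      (n - 1) * ∑ i, v i ^ 2 ≤ n * t ^ 2 → ∑ i, v i * y i ≤ t * b := by
    intro v hv t ht hvt
    obtain ⟨hx₀, hx⟩ := const_sub_nonneg_and_sq_le hv ht hvt
    have := h _ hx₀ hx
    simp only [sub_mul, sum_sub_distrib, ← mul_sum] at this
    linarith
  have hb : 0 ≤ b := by
    simpa using htest 0 (by simp) 1 zero_le_one (by simpa using zero_le_one.trans hn)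
  set q := ∑ i, centered y i ^ 2
  have hq : 0 ≤ q := by positivity
  set t := √((n - 1) * q / n)
  have ht : n * t ^ 2 = (n - 1) * q := by
    rw [Real.sq_sqrt (by positivity)]
    field_simp
  have hqt : q ≤ t * b := by
    simpa only [← sum_mul_centered (sum_centered y), ← sq] using
      htest (centered y) (sum_centered y) t (Real.sqrt_nonneg _) ht.ge
  have hqb : n * q ≤ (n - 1) * b ^ 2 := by
    rcases hq.eq_or_lt with hq0 | hqpos
    · rw [← hq0, mul_zero]; positivity
    · refine le_of_mul_le_mul_left ?_ hqpos
      calc q * (n * q) = n * q ^ 2 := by ring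
        _ ≤ n * (t * b) ^ 2 := by gcongr
        _ = (n * t ^ 2) * b ^ 2 := by ring
        _ = q * ((n - 1) * b ^ 2) := by rw [ht]; ring
  refine ⟨hb, le_of_mul_le_mul_left ?_ (by positivity : 0 < n)⟩
  linarith

theorem stmt4_general {K : ℕ} :
    {y : Fin K → ℝ | Real.sqrt (∑ i, (y i) ^ 2) ≤ ∑ i, y i} =
    {y : Fin K → ℝ | ∀ x ∈ {x : Fin K → ℝ | (∀ i, 0 ≤ x i) ∧
        Real.sqrt ((K : ℝ) - 1) * Real.sqrt (∑ i, (x i) ^ 2) ≤ ∑ i, x i},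
      0 ≤ ∑ i, x i * y i} := by
  rcases K.eq_zero_or_pos with rfl | hK
  · ext; simp
  have : Nonempty (Fin K) := ⟨⟨0, hK⟩⟩
  have hK₁ : (0 : ℝ) ≤ K - 1 := sub_nonneg.mpr (by exact_mod_cast hK)
  ext y
  simp only [Set.mem_ofPred_eq, ← Real.sqrt_mul hK₁, Real.sqrt_le_iff]
  constructor
  · rintro ⟨hy₀, hy⟩ x ⟨-, hx₀, hx⟩
    exact sum_mul_nonneg_of_sq_le hx₀ (by simpa only [Fintype.card_fin]) hy₀ hy
  · intro h
    refine sum_nonneg_and_sum_sq_le_of_forall_sum_mul_nonneg fun x hx₀ hx => h x ⟨hx₀, ?_, ?_⟩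
    · exact sum_nonneg fun i _ => hx₀ i
    · simpa only [Fintype.card_fin] using hx

theorem stmt4 {K : ℕ} (hK : 2 ≤ K) :
    {y : Fin K → ℝ | Real.sqrt (∑ i, (y i) ^ 2) ≤ ∑ i, y i} =
    {y : Fin K → ℝ | ∀ x ∈ {x : Fin K → ℝ | (∀ i, 0 ≤ x i) ∧
        Real.sqrt ((K : ℝ) - 1) * Real.sqrt (∑ i, (x i) ^ 2) ≤ ∑ i, x i},
      0 ≤ ∑ i, x i * y i} :=
  stmt4_general
end

section
/- Let M ∈ ℝ_+^{I×K} be such that M^T satisfies SSC1, i.e., C = { y ∈ ℝ_+^K : 1^T y ≥ √(K−1)·‖y‖₂ } is contained in cone(M^T), the conic hull of the rows of M. Then any vector s ∈ ℝ^K with M s ≥ 0 (entrywise) satisfies 1^T s ≥ ‖s‖₂. -/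
/-! With `n = ‖s‖₂` and `σ = 1ᵀs`, the vector `y = n • 1 - s` is nonnegative and satisfies
`(1ᵀy)² - (K - 1)‖y‖₂² = (n - σ)² ≥ 0`, so `y ∈ C ⊆ cone(Mᵀ)`. Writing `y = Mᵀc` with `c ≥ 0`
gives `0 ≤ cᵀ(Ms) = yᵀs = n (σ - n)`, hence `σ ≥ n`. -/

open Matrix

theorem dotProduct_nonneg_of_eq_vecMul {R ι κ : Type*} [CommSemiring R] [PartialOrder R]
    [IsOrderedRing R] [Fintype ι] [Fintype κ] (M : Matrix ι κ R) {c : ι → R} (hc : 0 ≤ c)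
    {y : κ → R} (hy : ∀ k, y k = ∑ i, c i * M i k) {s : κ → R} (hs : 0 ≤ M *ᵥ s) :
    0 ≤ y ⬝ᵥ s := by
  have hyc : y = c ᵥ* M := funext hy
  rw [hyc, ← dotProduct_mulVec]
  exact dotProduct_nonneg_of_nonneg hc hs

section SumSq

variable {ι : Type*} [Fintype ι]

theorem abs_le_sqrt_sum_sq (s : ι → ℝ) (k : ι) : |s k| ≤ √(∑ i, s i ^ 2) :=
  Real.abs_le_sqrt (Finset.single_le_sum (fun i _ => sq_nonneg (s i)) (Finset.mem_univ k))

theorem sub_nonneg_of_sqrt_sum_sq (s : ι → ℝ) (k : ι) : 0 ≤ √(∑ i, s i ^ 2) - s k :=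
  sub_nonneg.2 ((le_abs_self _).trans (abs_le_sqrt_sum_sq s k))

theorem sqrt_card_sub_one_mul_sqrt_sum_sq_le_sum (s : ι → ℝ) :
    √((Fintype.card ι : ℝ) - 1) * √(∑ k, (√(∑ i, s i ^ 2) - s k) ^ 2) ≤
      ∑ k, (√(∑ i, s i ^ 2) - s k) := by
  set n := √(∑ i, s i ^ 2)
  have hn : n ^ 2 = ∑ i, s i ^ 2 := Real.sq_sqrt (Finset.sum_nonneg fun i _ => sq_nonneg _)
  have hsum : ∑ k, (n - s k) = Fintype.card ι * n - ∑ k, s k := by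
    simp [Finset.sum_sub_distrib]
  have hsum_sq : ∑ k, (n - s k) ^ 2 = (Fintype.card ι + 1) * n ^ 2 - 2 * n * ∑ k, s k := by
    simp only [sub_sq, Finset.sum_add_distrib, Finset.sum_sub_distrib, ← Finset.mul_sum, ← hn,
      Finset.sum_const, Finset.card_univ, nsmul_eq_mul]
    ring
  have key : ((Fintype.card ι : ℝ) - 1) * ∑ k, (n - s k) ^ 2 ≤ (∑ k, (n - s k)) ^ 2 := by
    rw [hsum, hsum_sq]
    nlinarith [sq_nonneg (n - ∑ k, s k)]
  calc √((Fintype.card ι : ℝ) - 1) * √(∑ k, (n - s k) ^ 2)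
      = √(((Fintype.card ι : ℝ) - 1) * ∑ k, (n - s k) ^ 2) :=
        (Real.sqrt_mul' _ (Finset.sum_nonneg fun k _ => sq_nonneg _)).symm
    _ ≤ √((∑ k, (n - s k)) ^ 2) := Real.sqrt_le_sqrt key
    _ = ∑ k, (n - s k) := by
        rw [Real.sqrt_sq_eq_abs, abs_of_nonneg (Finset.sum_nonneg fun k _ =>
          sub_nonneg_of_sqrt_sum_sq s k)]

theorem sum_sub_sqrt_sum_sq_mul_eq (s : ι → ℝ) :
    ∑ k, (√(∑ i, s i ^ 2) - s k) * s k = √(∑ i, s i ^ 2) * (∑ k, s k - √(∑ i, s i ^ 2)) := by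
  have hn : √(∑ i, s i ^ 2) ^ 2 = ∑ i, s i ^ 2 :=
    Real.sq_sqrt (Finset.sum_nonneg fun i _ => sq_nonneg _)
  simp only [sub_mul, Finset.sum_sub_distrib, ← Finset.mul_sum, mul_sub, ← sq, hn]

theorem sqrt_sum_sq_le_sum_of_nonneg_mul (s : ι → ℝ)
    (h : 0 ≤ √(∑ i, s i ^ 2) * (∑ k, s k - √(∑ i, s i ^ 2))) :
    √(∑ i, s i ^ 2) ≤ ∑ k, s k := by
  rcases (Real.sqrt_nonneg (∑ i, s i ^ 2)).eq_or_lt with hn | hn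
  · have hs : ∀ k, s k = 0 := fun k => abs_nonpos_iff.1 (hn ▸ abs_le_sqrt_sum_sq s k)
    simp [hs]
  · linarith [nonneg_of_mul_nonneg_right (by rwa [mul_comm] at h) hn]

end SumSq

theorem stmt9_general {I K : ℕ}
    (M : Matrix (Fin I) (Fin K) ℝ)
    (hSSC1 : ∀ y ∈ {y : Fin K → ℝ | (∀ i, 0 ≤ y i) ∧
        Real.sqrt ((K : ℝ) - 1) * Real.sqrt (∑ i, (y i) ^ 2) ≤ ∑ i, y i},
      ∃ c : Fin I → ℝ, (∀ i, 0 ≤ c i) ∧ ∀ k, y k = ∑ i, c i * M i k)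
    (s : Fin K → ℝ) (hs : ∀ i, 0 ≤ ∑ k, M i k * s k) :
    Real.sqrt (∑ k, (s k) ^ 2) ≤ ∑ k, s k := by
  have hyC := sqrt_card_sub_one_mul_sqrt_sum_sq_le_sum s
  rw [Fintype.card_fin] at hyC
  obtain ⟨c, hc, hy⟩ := hSSC1 _ ⟨sub_nonneg_of_sqrt_sum_sq s, hyC⟩
  have hdot := dotProduct_nonneg_of_eq_vecMul M hc hy (s := s) hs
  rw [dotProduct, sum_sub_sqrt_sum_sq_mul_eq] at hdot
  exact sqrt_sum_sq_le_sum_of_nonneg_mul s hdot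

theorem stmt9 {I K : ℕ}
    (M : Matrix (Fin I) (Fin K) ℝ)
    (hMnn : ∀ i k, 0 ≤ M i k)
    (hSSC1 : ∀ y ∈ {y : Fin K → ℝ | (∀ i, 0 ≤ y i) ∧
        Real.sqrt ((K : ℝ) - 1) * Real.sqrt (∑ i, (y i) ^ 2) ≤ ∑ i, y i},
      ∃ c : Fin I → ℝ, (∀ i, 0 ≤ c i) ∧ ∀ k, y k = ∑ i, c i * M i k)
    (s : Fin K → ℝ) (hs : ∀ i, 0 ≤ ∑ k, M i k * s k) :
    Real.sqrt (∑ k, (s k) ^ 2) ≤ ∑ k, s k :=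
  stmt9_general M hSSC1 s hs
end

section
/- Identifiability of maximum-volume-constrained NMF: let X = M̃H̃ with M̃ ∈ ℝ_+^{I×K}, H̃ ∈ ℝ_+^{K×J}, rank(M̃) = rank(H̃) = K, 1^T H̃ = 1^T, and suppose M̃^T satisfies the sufficiently scattered condition (SSC1 and SSC2). If (M#, H#) is any optimal solution of maximizing det(M^T M) subject to X = MH, M ≥ 0, H ≥ 0, 1^T H = 1^T, then there exists a permutation matrix Γ with M# = M̃Γ and H# = Γ^T H̃. -/
/-!
Write `L` for a left inverse of `Mt` and put `A = L Ms`. Because both factorizations have full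
rank, `Ms = Mt A` and `Ht = A Hs`, and comparing column sums gives `1ᵀ A = 1ᵀ`. Optimality of
`Ms` gives `det (MsᵀMs) = (det A)² det (MtᵀMt) ≥ det (MtᵀMt)`, so `(det A)² ≥ 1`. Each column `a`
of `A` satisfies `Mt a ≥ 0` (it is a column of `Ms`), and SSC1 dualizes to `cone*(Mtᵀ) ⊆ C*`, so
`‖a‖ ≤ 1ᵀ a = 1`. AM–GM on the eigenvalues of `AᵀA` gives `(det A)² ≤ (tr (AᵀA) / K)^K`, which
forces every column to have norm exactly `1`: it lies on the boundary of `C*`, and SSC2 makes it a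
standard basis vector. Since `det A ≠ 0` these basis vectors are distinct, so `A` is a
permutation matrix.
-/

open Matrix Finset Real Filter Topology

theorem prod_le_sum_div_card_pow {ι : Type*} [Fintype ι] {z : ι → ℝ} (hz : ∀ i, 0 ≤ z i) :
    ∏ i, z i ≤ ((∑ i, z i) / Fintype.card ι) ^ Fintype.card ι := by
  rcases isEmpty_or_nonempty ι with hι | hι
  · simp
  have hn : (0 : ℝ) < Fintype.card ι := by exact_mod_cast Fintype.card_pos
  have hamgm := geom_mean_le_arith_mean univ (fun _ => (1 : ℝ)) z (fun _ _ => zero_le_one)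
    (by simpa using hn) (fun i _ => hz i)
  simp only [rpow_one, sum_const, card_univ, nsmul_eq_mul, mul_one, one_mul] at hamgm
  rwa [rpow_inv_le_iff_of_pos (prod_nonneg fun i _ => hz i)
    (div_nonneg (sum_nonneg fun i _ => hz i) hn.le) hn, rpow_natCast] at hamgm

namespace Matrix

section Rank

variable {m n : Type*} [Fintype m] [Fintype n]

theorem isUnit_of_rank_eq_card [DecidableEq n] {𝕜 : Type*} [Field 𝕜] {A : Matrix n n 𝕜}
    (h : A.rank = Fintype.card n) : IsUnit A := by
  refine mulVec_surjective_iff_isUnit.mp ((LinearMap.range_eq_top (f := A.mulVecLin)).mp ?_)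
  exact Submodule.eq_top_of_finrank_eq (by rw [← rank, h, Module.finrank_fintype_fun_eq_card])

theorem isUnit_det_transpose_mul_self [DecidableEq n] {A : Matrix m n ℝ}
    (h : A.rank = Fintype.card n) : IsUnit (Aᵀ * A).det :=
  (isUnit_iff_isUnit_det _).mp (isUnit_of_rank_eq_card (by rw [rank_transpose_mul_self, h]))

theorem det_transpose_mul_self_pos [DecidableEq n] {A : Matrix m n ℝ}
    (h : A.rank = Fintype.card n) : 0 < (Aᵀ * A).det := by
  have hpsd : (Aᵀ * A).PosSemidef := by simpa using posSemidef_conjTranspose_mul_self A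
  exact hpsd.det_nonneg.lt_of_ne' (isUnit_det_transpose_mul_self h).ne_zero

theorem exists_mul_eq_one_of_rank_eq_card_width [DecidableEq n] {A : Matrix m n ℝ}
    (h : A.rank = Fintype.card n) : ∃ B : Matrix n m ℝ, B * A = 1 :=
  ⟨(Aᵀ * A)⁻¹ * Aᵀ, by rw [Matrix.mul_assoc, nonsing_inv_mul _ (isUnit_det_transpose_mul_self h)]⟩

theorem exists_mul_eq_one_of_rank_eq_card_height [DecidableEq m] {A : Matrix m n ℝ}
    (h : A.rank = Fintype.card m) : ∃ B : Matrix n m ℝ, A * B = 1 := by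
  obtain ⟨B, hB⟩ := exists_mul_eq_one_of_rank_eq_card_width (A := Aᵀ) (by rwa [rank_transpose])
  exact ⟨Bᵀ, by simpa using congrArg transpose hB⟩

end Rank

section Factorization

variable {R : Type*} [CommRing R] {m n p : Type*} [Fintype n] [DecidableEq n] [Fintype p]

theorem mul_mul_eq_one_of_eq_mul {A : Matrix n n R} {H H' : Matrix n p R} {B : Matrix p n R}
    (hB : H' * B = 1) (hA : H' = A * H) : H * (B * A) = 1 := by
  have hAH : A * (H * B) = 1 := by rw [← Matrix.mul_assoc, ← hA, hB]
  rw [← Matrix.mul_assoc, mul_eq_one_comm.mp hAH]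

theorem exists_eq_mul_of_mul_eq [Fintype m] {M M' : Matrix m n R} {H H' : Matrix n p R}
    {L : Matrix n m R} {B : Matrix p n R} (hL : L * M = 1) (hB : H * B = 1)
    (h : M * H = M' * H') : ∃ A : Matrix n n R, M' = M * A ∧ H = A * H' := by
  have hH : H = L * M' * H' := by
    rw [Matrix.mul_assoc, ← h, ← Matrix.mul_assoc, hL, Matrix.one_mul]
  refine ⟨L * M', ?_, hH⟩
  calc M' = M' * (H' * (B * (L * M'))) := by rw [mul_mul_eq_one_of_eq_mul hB hH, Matrix.mul_one]
    _ = M * (H * B) * (L * M') := by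
      rw [← Matrix.mul_assoc, ← Matrix.mul_assoc, ← h, Matrix.mul_assoc M]
    _ = M * (L * M') := by rw [hB, Matrix.mul_one]

theorem sum_apply_eq_one_of_eq_mul {A : Matrix n n R} {H H' : Matrix n p R} {B : Matrix p n R}
    (hB : H' * B = 1) (hA : H' = A * H) (hH : ∀ j, ∑ k, H k j = 1)
    (hH' : ∀ j, ∑ k, H' k j = 1) (j : n) : ∑ k, A k j = 1 := by
  have hcancel : (1 ᵥ* A) ᵥ* H = 1 ᵥ* H := by
    rw [vecMul_vecMul, ← hA]
    ext i
    simp [vecMul, dotProduct, hH, hH']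
  have hA1 : 1 ᵥ* A = 1 := by
    rw [← vecMul_one (1 ᵥ* A), ← mul_mul_eq_one_of_eq_mul hB hA, ← vecMul_vecMul, hcancel,
      vecMul_vecMul, mul_mul_eq_one_of_eq_mul hB hA, vecMul_one]
  simpa [vecMul, dotProduct] using congrFun hA1 j

theorem exists_perm_eq_transpose_permMatrix {A : Matrix n n R} (hA : A.det ≠ 0) {κ : n → n}
    (hκ : ∀ j, Aᵀ j = Pi.single (κ j) 1) : ∃ σ : Equiv.Perm n, A = (σ.permMatrix R)ᵀ := by
  have hinj : Function.Injective κ := fun j₁ j₂ h => by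
    by_contra hne
    have hcol : Aᵀ j₁ = Aᵀ j₂ := by rw [hκ, hκ, h]
    exact hA (det_zero_of_column_eq hne fun i => congrFun hcol i)
  refine ⟨Equiv.ofBijective κ hinj.bijective_of_finite, ?_⟩
  ext i j
  rw [← transpose_apply A, hκ]
  simp [PEquiv.toMatrix_apply, Pi.single_apply, eq_comm]

end Factorization

section Gram

variable {m n : Type*} [Fintype m] [Fintype n] [DecidableEq n]

theorem PosSemidef.det_le_trace_div_card_pow {A : Matrix n n ℝ} (hA : A.PosSemidef) :
    A.det ≤ (A.trace / Fintype.card n) ^ Fintype.card n := by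
  simpa [hA.1.det_eq_prod_eigenvalues, hA.1.trace_eq_sum_eigenvalues] using
    prod_le_sum_div_card_pow hA.eigenvalues_nonneg

theorem one_le_det_sq_of_det_gram_le {M : Matrix m n ℝ} {A : Matrix n n ℝ}
    (hM : 0 < (Mᵀ * M).det) (h : (Mᵀ * M).det ≤ ((M * A)ᵀ * (M * A)).det) : 1 ≤ A.det ^ 2 := by
  have hgram : ((M * A)ᵀ * (M * A)).det = A.det ^ 2 * (Mᵀ * M).det := by
    rw [transpose_mul, Matrix.mul_assoc, ← Matrix.mul_assoc Mᵀ, det_mul, det_mul, det_transpose]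
    ring
  rw [hgram] at h
  nlinarith

theorem sum_sq_eq_one_of_one_le_det_sq {A : Matrix n n ℝ} (hdet : 1 ≤ A.det ^ 2)
    (hcol : ∀ j, ∑ k, A k j ^ 2 ≤ 1) (j : n) : ∑ k, A k j ^ 2 = 1 := by
  have hcard : 0 < Fintype.card n := Fintype.card_pos_iff.mpr ⟨j⟩
  have hn : (0 : ℝ) < Fintype.card n := by exact_mod_cast hcard
  have htrace : (Aᵀ * A).trace = ∑ j, ∑ k, A k j ^ 2 := by simp [trace, mul_apply, sq]
  have hpsd : (Aᵀ * A).PosSemidef := by simpa using posSemidef_conjTranspose_mul_self A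
  have hmean : 1 ≤ (Aᵀ * A).trace / Fintype.card n := by
    have h := hdet.trans_eq (by rw [det_mul, det_transpose, sq] : A.det ^ 2 = (Aᵀ * A).det)
      |>.trans hpsd.det_le_trace_div_card_pow
    exact (one_le_pow_iff_of_nonneg (div_nonneg hpsd.trace_nonneg hn.le) hcard.ne').mp h
  rw [one_le_div hn, htrace] at hmean
  by_contra hne
  have hlt := sum_lt_sum (fun i _ => hcol i) ⟨j, mem_univ j, lt_of_le_of_ne (hcol j) hne⟩
  simp only [sum_const, card_univ, nsmul_eq_mul, mul_one] at hlt
  linarith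

end Gram

end Matrix

/-- The cone `C` of SSC1. -/
def scatteredCone (K : ℕ) : Set (Fin K → ℝ) :=
  {y | (∀ i, 0 ≤ y i) ∧ √((K : ℝ) - 1) * √(∑ i, y i ^ 2) ≤ ∑ i, y i}

/-- The cone `C*` of SSC2. -/
def scatteredConeDual (K : ℕ) : Set (Fin K → ℝ) :=
  {y | √(∑ i, y i ^ 2) ≤ ∑ i, y i}

theorem nonneg_of_sqrt_mul_sqrt_le_sum {K : ℕ} {z : Fin K → ℝ}
    (hz : √((K : ℝ) - 1) * √(∑ i, z i ^ 2) ≤ ∑ i, z i) (k : Fin K) : 0 ≤ z k := by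
  set s := ∑ i, z i
  set q := ∑ i, z i ^ 2
  have hK : (1 : ℝ) ≤ K := by exact_mod_cast k.pos
  have hs : 0 ≤ s := (by positivity : 0 ≤ √((K : ℝ) - 1) * √q).trans hz
  have hqs : (K - 1) * q ≤ s ^ 2 := by
    have := pow_le_pow_left₀ (by positivity) hz 2
    rwa [mul_pow, sq_sqrt (by linarith), sq_sqrt (by positivity)] at this
  have hcs : (s - z k) ^ 2 ≤ (K - 1) * (q - z k ^ 2) := by
    have := sq_sum_le_card_mul_sum_sq (s := univ.erase k) (f := z)
    rwa [sum_erase_eq_sub (mem_univ k), sum_erase_eq_sub (mem_univ k),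
      card_erase_of_mem (mem_univ k), card_univ, Fintype.card_fin, Nat.cast_pred k.pos] at this
  by_contra! hneg
  nlinarith [mul_nonneg hs (neg_nonneg.mpr hneg.le)]

theorem mem_scatteredConeDual_of_inner_nonneg {K : ℕ} {y : Fin K → ℝ}
    (hy : ∀ z ∈ scatteredCone K, 0 ≤ ∑ k, z k * y k) : y ∈ scatteredConeDual K := by
  rcases K.eq_zero_or_pos with rfl | hK
  · simp [scatteredConeDual]
  set s := ∑ k, y k with hs_def
  set q := ∑ k, y k ^ 2 with hq_def
  have hK1 : (1 : ℝ) ≤ K := by exact_mod_cast hK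
  have hs : 0 ≤ s := by
    have h1 : (fun _ => (1 : ℝ)) ∈ scatteredCone K := by
      refine ⟨fun _ => zero_le_one, ?_⟩
      simp only [one_pow, sum_const, card_univ, Fintype.card_fin, nsmul_eq_mul, mul_one]
      rw [← sqrt_mul (by linarith), sqrt_le_left (by positivity)]
      nlinarith
    simpa using hy _ h1
  have hcs : s ^ 2 ≤ K * q := by
    simpa using sq_sum_le_card_mul_sum_sq (s := univ) (f := y)
  -- `z` minimizes `∑ k, z k * y k` over the slice `∑ k, z k = r` of `C`.
  set r := √((K - 1) * (K * q - s ^ 2))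
  have hr : r ^ 2 = (K - 1) * (K * q - s ^ 2) := sq_sqrt (by nlinarith)
  set z : Fin K → ℝ := fun k => (s + r) / K - y k
  have hz_sum : ∑ k, z k = r := by
    simp only [z, sum_sub_distrib, sum_const, card_univ, Fintype.card_fin, nsmul_eq_mul]
    field_simp
    ring
  have hz_sq : (K - 1) * ∑ k, z k ^ 2 = r ^ 2 := by
    simp only [z, sub_sq, sum_add_distrib, sum_sub_distrib, ← mul_sum, sum_const, card_univ,
      Fintype.card_fin, nsmul_eq_mul]
    rw [← hs_def, ← hq_def]
    field_simp
    linear_combination (-1) * hr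
  have hz : z ∈ scatteredCone K := by
    have hbd : √((K : ℝ) - 1) * √(∑ k, z k ^ 2) ≤ ∑ k, z k := by
      rw [← sqrt_mul (by linarith), hz_sq, hz_sum, sqrt_sq (sqrt_nonneg _)]
    exact ⟨nonneg_of_sqrt_mul_sqrt_le_sum hbd, hbd⟩
  have hzy : ∑ k, z k * y k = (s + r) / K * s - q := by
    simp only [z, sub_mul, sum_sub_distrib, ← mul_sum, ← sq]
    rw [← hs_def, ← hq_def]
  have hineq := hy z hz
  rw [hzy, div_mul_eq_mul_div, sub_nonneg, le_div_iff₀ (by positivity)] at hineq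
  have hsq : (K * q - s ^ 2) ^ 2 ≤ (K - 1) * (K * q - s ^ 2) * s ^ 2 := by
    rw [← hr, ← mul_pow]
    exact pow_le_pow_left₀ (by linarith) (by linarith) 2
  change √q ≤ s
  rw [sqrt_le_left hs]
  by_contra! hlt
  nlinarith [mul_pos (by nlinarith : (0 : ℝ) < K * q - s ^ 2) (by nlinarith : 0 < q - s ^ 2)]

theorem mem_scatteredConeDual_of_mulVec_nonneg {I K : ℕ} {M : Matrix (Fin I) (Fin K) ℝ}
    (hC : ∀ y ∈ scatteredCone K, ∃ c : Fin I → ℝ, (∀ i, 0 ≤ c i) ∧ ∀ k, y k = ∑ i, c i * M i k)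
    {y : Fin K → ℝ} (hy : ∀ i, 0 ≤ ∑ k, M i k * y k) : y ∈ scatteredConeDual K := by
  refine mem_scatteredConeDual_of_inner_nonneg fun z hz => ?_
  obtain ⟨c, hc, hzc⟩ := hC z hz
  calc 0 ≤ ∑ i, c i * ∑ k, M i k * y k := sum_nonneg fun i _ => mul_nonneg (hc i) (hy i)
    _ = ∑ k, z k * y k := by
      simp only [hzc, mul_sum, sum_mul, mul_assoc]
      exact sum_comm

theorem mem_frontier_scatteredConeDual {K : ℕ} (hK : 1 < K) {a : Fin K → ℝ}
    (ha : √(∑ k, a k ^ 2) = ∑ k, a k) (hpos : 0 < ∑ k, a k) :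
    a ∈ frontier (scatteredConeDual K) := by
  set s := ∑ k, a k with hs_def
  have hq : ∑ k, a k ^ 2 = s ^ 2 := (sqrt_eq_iff_eq_sq (by positivity) hpos.le).mp ha
  have hK1 : (1 : ℝ) < K := by exact_mod_cast hK
  rw [frontier_eq_closure_inter_closure]
  refine ⟨subset_closure ha.le, ?_⟩
  have hlim : Tendsto (fun ε : ℝ => fun k => a k - ε) (𝓝[>] 0) (𝓝 a) := by
    apply tendsto_nhdsWithin_of_tendsto_nhds
    have : Continuous (fun ε : ℝ => fun k => a k - ε) := by fun_prop
    simpa using this.tendsto 0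
  refine mem_closure_of_tendsto hlim ?_
  filter_upwards [Ioo_mem_nhdsGT (by positivity : (0 : ℝ) < 2 * s / K)] with ε ⟨hε, hεs⟩ hmem
  have hsum : ∑ k, (a k - ε) = s - K * ε := by simp [sum_sub_distrib, hs_def]
  have hsq : ∑ k, (a k - ε) ^ 2 = s ^ 2 - 2 * ε * s + K * ε ^ 2 := by
    simp only [sub_sq, sum_add_distrib, sum_sub_distrib, ← sum_mul, ← mul_sum, hq, sum_const,
      card_univ, Fintype.card_fin, nsmul_eq_mul]
    ring
  rw [scatteredConeDual, Set.mem_ofPred_eq, hsum, hsq, sqrt_le_iff] at hmem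
  rw [lt_div_iff₀ (by positivity)] at hεs
  nlinarith [hmem.2, mul_pos hε (sub_pos.mpr hK1)]

theorem exists_eq_single_of_sum_sq_eq_one {I K : ℕ} {M : Matrix (Fin I) (Fin K) ℝ}
    (hSSC2 : {y : Fin K → ℝ | ∀ i, 0 ≤ ∑ k, M i k * y k} ∩ frontier (scatteredConeDual K) =
      {y | ∃ α : ℝ, 0 ≤ α ∧ ∃ k : Fin K, y = α • Pi.single k 1})
    {a : Fin K → ℝ} (ha : ∀ i, 0 ≤ ∑ k, M i k * a k) (hsq : ∑ k, a k ^ 2 = 1)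
    (hsum : ∑ k, a k = 1) : ∃ k, a = Pi.single k 1 := by
  rcases lt_or_ge 1 K with hK | hK
  · have hfr := mem_frontier_scatteredConeDual hK (by rw [hsq, hsum, sqrt_one])
      (by rw [hsum]; exact one_pos)
    obtain ⟨α, -, k, rfl⟩ := hSSC2.subset ⟨ha, hfr⟩
    have hα : α = 1 := by simpa [Pi.single_apply] using hsum
    exact ⟨k, by rw [hα, one_smul]⟩
  · interval_cases K
    · simp at hsum
    · exact ⟨0, funext fun k => by fin_cases k; simpa using hsum⟩

theorem stmt12_general {I J K : ℕ}
    (X : Matrix (Fin I) (Fin J) ℝ)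
    (Mt : Matrix (Fin I) (Fin K) ℝ) (Ht : Matrix (Fin K) (Fin J) ℝ)
    (hMtnn : ∀ i k, 0 ≤ Mt i k) (hHtnn : ∀ k j, 0 ≤ Ht k j)
    (hX : X = Mt * Ht)
    (hrM : Mt.rank = K) (hrH : Ht.rank = K)
    (hHtsum : ∀ j, ∑ k, Ht k j = 1)
    (hSSC1 : ∀ y ∈ {y : Fin K → ℝ | (∀ i, 0 ≤ y i) ∧
        Real.sqrt ((K : ℝ) - 1) * Real.sqrt (∑ i, (y i) ^ 2) ≤ ∑ i, y i},
      ∃ c : Fin I → ℝ, (∀ i, 0 ≤ c i) ∧ ∀ k, y k = ∑ i, c i * Mt i k)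
    (hSSC2 : {y : Fin K → ℝ | ∀ i, 0 ≤ ∑ k, Mt i k * y k} ∩
        frontier {y : Fin K → ℝ | Real.sqrt (∑ i, (y i) ^ 2) ≤ ∑ i, y i} =
      {y : Fin K → ℝ | ∃ α : ℝ, 0 ≤ α ∧ ∃ k : Fin K, y = α • (Pi.single k 1 : Fin K → ℝ)})
    (Ms : Matrix (Fin I) (Fin K) ℝ) (Hs : Matrix (Fin K) (Fin J) ℝ)
    (hMsnn : ∀ i k, 0 ≤ Ms i k)
    (hXs : X = Ms * Hs)
    (hHssum : ∀ j, ∑ k, Hs k j = 1)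
    (hopt : ∀ (M : Matrix (Fin I) (Fin K) ℝ) (H : Matrix (Fin K) (Fin J) ℝ),
      (∀ i k, 0 ≤ M i k) → (∀ k j, 0 ≤ H k j) → X = M * H →
      (∀ j, ∑ k, H k j = 1) →
      (M.transpose * M).det ≤ (Ms.transpose * Ms).det) :
    ∃ Γ : Matrix (Fin K) (Fin K) ℝ,
      (∃ σ : Equiv.Perm (Fin K), ∀ i j, Γ i j = if σ j = i then 1 else 0) ∧
      Ms = Mt * Γ ∧ Hs = Γ.transpose * Ht := by
  have hrM' : Mt.rank = Fintype.card (Fin K) := by rw [hrM, Fintype.card_fin]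
  obtain ⟨L, hL⟩ := exists_mul_eq_one_of_rank_eq_card_width hrM'
  obtain ⟨B, hB⟩ := exists_mul_eq_one_of_rank_eq_card_height (by rwa [Fintype.card_fin])
  obtain ⟨A, rfl, hHt⟩ := exists_eq_mul_of_mul_eq hL hB (hX.symm.trans hXs)
  have hsum : ∀ j, ∑ k, A k j = 1 := sum_apply_eq_one_of_eq_mul hB hHt hHssum hHtsum
  have hdet : 1 ≤ A.det ^ 2 := one_le_det_sq_of_det_gram_le (det_transpose_mul_self_pos hrM')
    (hopt Mt Ht hMtnn hHtnn hX hHtsum)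
  have hdual : ∀ j i, 0 ≤ ∑ k, Mt i k * Aᵀ j k := fun j i => hMsnn i j
  have hnorm : ∀ j, ∑ k, Aᵀ j k ^ 2 = 1 := sum_sq_eq_one_of_one_le_det_sq hdet fun j =>
    sqrt_le_one.mp ((mem_scatteredConeDual_of_mulVec_nonneg hSSC1 (hdual j)).trans_eq (hsum j))
  choose κ hκ using fun j => exists_eq_single_of_sum_sq_eq_one hSSC2 (hdual j) (hnorm j) (hsum j)
  obtain ⟨σ, rfl⟩ := exists_perm_eq_transpose_permMatrix (by nlinarith) hκ
  refine ⟨_, ⟨σ, fun i j => by simp [PEquiv.toMatrix_apply]⟩, rfl, ?_⟩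
  rw [hHt, ← Matrix.mul_assoc, transpose_transpose, transpose_permMatrix, ← permMatrix_mul,
    inv_mul_cancel, permMatrix_one, Matrix.one_mul]

theorem stmt12 {I J K : ℕ}
    (X : Matrix (Fin I) (Fin J) ℝ)
    (Mt : Matrix (Fin I) (Fin K) ℝ) (Ht : Matrix (Fin K) (Fin J) ℝ)
    (hMtnn : ∀ i k, 0 ≤ Mt i k) (hHtnn : ∀ k j, 0 ≤ Ht k j)
    (hX : X = Mt * Ht)
    (hrM : Mt.rank = K) (hrH : Ht.rank = K)
    (hHtsum : ∀ j, ∑ k, Ht k j = 1)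
    (hSSC1 : ∀ y ∈ {y : Fin K → ℝ | (∀ i, 0 ≤ y i) ∧
        Real.sqrt ((K : ℝ) - 1) * Real.sqrt (∑ i, (y i) ^ 2) ≤ ∑ i, y i},
      ∃ c : Fin I → ℝ, (∀ i, 0 ≤ c i) ∧ ∀ k, y k = ∑ i, c i * Mt i k)
    (hSSC2 : {y : Fin K → ℝ | ∀ i, 0 ≤ ∑ k, Mt i k * y k} ∩
        frontier {y : Fin K → ℝ | Real.sqrt (∑ i, (y i) ^ 2) ≤ ∑ i, y i} =
      {y : Fin K → ℝ | ∃ α : ℝ, 0 ≤ α ∧ ∃ k : Fin K, y = α • (Pi.single k 1 : Fin K → ℝ)})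
    (Ms : Matrix (Fin I) (Fin K) ℝ) (Hs : Matrix (Fin K) (Fin J) ℝ)
    (hMsnn : ∀ i k, 0 ≤ Ms i k) (hHsnn : ∀ k j, 0 ≤ Hs k j)
    (hXs : X = Ms * Hs)
    (hHssum : ∀ j, ∑ k, Hs k j = 1)
    (hopt : ∀ (M : Matrix (Fin I) (Fin K) ℝ) (H : Matrix (Fin K) (Fin J) ℝ),
      (∀ i k, 0 ≤ M i k) → (∀ k j, 0 ≤ H k j) → X = M * H →
      (∀ j, ∑ k, H k j = 1) →
      (M.transpose * M).det ≤ (Ms.transpose * Ms).det) :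
    ∃ Γ : Matrix (Fin K) (Fin K) ℝ,
      (∃ σ : Equiv.Perm (Fin K), ∀ i j, Γ i j = if σ j = i then 1 else 0) ∧
      Ms = Mt * Γ ∧ Hs = Γ.transpose * Ht :=
  stmt12_general X Mt Ht hMtnn hHtnn hX hrM hrH hHtsum hSSC1 hSSC2 Ms Hs hMsnn hXs hHssum hopt
end
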